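/- arXiv:2210.08643 — 2 statements merged into one kernel-verified Lean document; each statement's English description precedes it below -/
import Mathlib

section
/- Let N ≥ 8 be an integer and let z be a real number with 0 ≤ z ≤ 2√(1 − 1/N). Then for all integers n₁, n₀ with 1 ≤ n₁ ≤ N and 1 ≤ n₀ ≤ N, the Katz-log lower confidence limit satisfies ln(n₁/n₀) − z·√(1/n₁ + 1/n₀ − 2/N) ≤ ln(N) − z·√(1 − 1/N). In particular, the highest privacy violation detectable from N samples of each distribution using the Katz-log lower bound is ln(N) − z·√(1 − 1/N), attained at n₁ = N and n₀ = 1. -/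
open Real

lemma half_le_sqrt (x y : ℝ) (h : x ^ 2 ≤ 4 * y) : x ≤ 2 * Real.sqrt y := by
  rcases le_or_gt x 0 with h0 | h0
  · exact h0.trans (by positivity)
  · have hy : 0 ≤ y := by nlinarith
    have h1 : Real.sqrt (x ^ 2) ≤ Real.sqrt (4 * y) := Real.sqrt_le_sqrt h
    rw [Real.sqrt_sq h0.le, show (4:ℝ) * y = 2 ^ 2 * y by ring,
      Real.sqrt_mul (by norm_num), Real.sqrt_sq (by norm_num)] at h1
    exact h1

lemma pow_log_le {a b : ℝ} (m n : ℕ) (ha : 0 < a) (h : a ^ m ≤ b ^ n) :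
    (m : ℝ) * Real.log a ≤ (n : ℝ) * Real.log b := by
  have := Real.log_le_log (by positivity) h
  rwa [Real.log_pow, Real.log_pow] at this

set_option maxHeartbeats 1000000 in
lemma key_log (N b : ℕ) (hN : 8 ≤ N) (hb1 : 1 ≤ b) (hbN : b ≤ N) :
    2 * (1 - 1 / (N : ℝ)) - Real.log b
      ≤ 2 * Real.sqrt ((1 - 1 / (N : ℝ)) * (1 / (b : ℝ) - 1 / (N : ℝ))) := by
  have hn8 : (8:ℝ) ≤ (N:ℝ) := by exact_mod_cast hN
  have hn0 : (0:ℝ) < (N:ℝ) := by linarith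
  have hc0 : 0 < 1 / (N:ℝ) := by positivity
  have hc8 : 1 / (N:ℝ) ≤ 1 / 8 := by
    rw [div_le_div_iff₀ hn0 (by norm_num)]; linarith
  have hb0 : (0:ℝ) < (b:ℝ) := by exact_mod_cast hb1
  have hbn : (b:ℝ) ≤ (N:ℝ) := by exact_mod_cast hbN
  have hyb : 0 ≤ 1 / (b:ℝ) - 1 / (N:ℝ) := by
    have : 1 / (N:ℝ) ≤ 1 / (b:ℝ) := one_div_le_one_div_of_le hb0 hbn
    linarith
  have hy1 : (0:ℝ) ≤ 1 - 1 / (N:ℝ) := by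
    have : 1 / (N:ℝ) ≤ 1 := by rw [div_le_one hn0]; linarith
    linarith
  have l2lo : (0.6931471803:ℝ) < Real.log 2 := Real.log_two_gt_d9
  have l2hi : Real.log 2 < 0.6931471808 := Real.log_two_lt_d9
  by_cases h8 : 8 ≤ b
  · have hlb : Real.log 8 ≤ Real.log (b:ℝ) :=
      Real.log_le_log (by norm_num) (by exact_mod_cast h8)
    have l8 : Real.log 8 = 3 * Real.log 2 := by
      rw [show (8:ℝ) = 2 ^ 3 by norm_num, Real.log_pow]; push_cast; ring
    have hsq : 0 ≤ 2 * Real.sqrt ((1 - 1 / (N:ℝ)) * (1 / (b:ℝ) - 1 / (N:ℝ))) := by positivity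
    nlinarith
  · push_neg at h8
    have l3lo : (1.0974:ℝ) ≤ Real.log 3 := by
      have := pow_log_le 19 12 (show (0:ℝ) < 2 by norm_num)
        (show (2:ℝ) ^ 19 ≤ 3 ^ 12 by norm_num)
      push_cast at this; linarith
    have l3hi : Real.log 3 ≤ 1.109036 := by
      have := pow_log_le 5 8 (show (0:ℝ) < 3 by norm_num)
        (show (3:ℝ) ^ 5 ≤ 2 ^ 8 by norm_num)
      push_cast at this; linarith
    have l5lo : (1.594238:ℝ) ≤ Real.log 5 := by
      have := pow_log_le 23 10 (show (0:ℝ) < 2 by norm_num)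
        (show (2:ℝ) ^ 23 ≤ 5 ^ 10 by norm_num)
      push_cast at this; linarith
    have l5hi : Real.log 5 ≤ 1.617344 := by
      have := pow_log_le 3 7 (show (0:ℝ) < 5 by norm_num)
        (show (5:ℝ) ^ 3 ≤ 2 ^ 7 by norm_num)
      push_cast at this; linarith
    have l7lo : (1.940812:ℝ) ≤ Real.log 7 := by
      have := pow_log_le 14 5 (show (0:ℝ) < 2 by norm_num)
        (show (2:ℝ) ^ 14 ≤ 7 ^ 5 by norm_num)
      push_cast at this; linarith
    have l7hi : Real.log 7 ≤ 1.953415 := by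
      have := pow_log_le 11 31 (show (0:ℝ) < 7 by norm_num)
        (show (7:ℝ) ^ 11 ≤ 2 ^ 31 by norm_num)
      push_cast at this; linarith
    have l6lo : (1.7905:ℝ) ≤ Real.log 6 := by
      rw [show (6:ℝ) = 2 * 3 by norm_num, Real.log_mul (by norm_num) (by norm_num)]
      linarith
    have l6hi : Real.log 6 ≤ 1.802184 := by
      rw [show (6:ℝ) = 2 * 3 by norm_num, Real.log_mul (by norm_num) (by norm_num)]
      linarith
    have l4lo : (1.3862943:ℝ) ≤ Real.log 4 := by
      rw [show (4:ℝ) = 2 ^ 2 by norm_num, Real.log_pow]; push_cast; linarith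
    have l4hi : Real.log 4 ≤ 1.3862944 := by
      rw [show (4:ℝ) = 2 ^ 2 by norm_num, Real.log_pow]; push_cast; linarith
    interval_cases b
    · -- b = 1
      push_cast
      rw [show (1:ℝ)/1 = 1 by norm_num, Real.log_one, Real.sqrt_mul_self hy1]
      linarith
    · push_cast
      apply half_le_sqrt
      nlinarith [mul_nonneg (sub_nonneg.2 l2lo.le) (sub_nonneg.2 l2hi.le),
        mul_nonneg hc0.le (sub_nonneg.2 l2hi.le)]
    · push_cast
      apply half_le_sqrt
      nlinarith [mul_nonneg (sub_nonneg.2 l3lo) (sub_nonneg.2 l3hi),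
        mul_nonneg hc0.le (sub_nonneg.2 l3hi)]
    · push_cast
      apply half_le_sqrt
      nlinarith [mul_nonneg (sub_nonneg.2 l4lo) (sub_nonneg.2 l4hi),
        mul_nonneg hc0.le (sub_nonneg.2 l4hi)]
    · push_cast
      apply half_le_sqrt
      nlinarith [mul_nonneg (sub_nonneg.2 l5lo) (sub_nonneg.2 l5hi),
        mul_nonneg hc0.le (sub_nonneg.2 l5hi)]
    · push_cast
      apply half_le_sqrt
      nlinarith [mul_nonneg (sub_nonneg.2 l6lo) (sub_nonneg.2 l6hi),
        mul_nonneg hc0.le (sub_nonneg.2 l6hi)]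
    · push_cast
      apply half_le_sqrt
      nlinarith [mul_nonneg (sub_nonneg.2 l7lo) (sub_nonneg.2 l7hi),
        mul_nonneg hc0.le (sub_nonneg.2 l7hi)]

/-- With `N ≥ 8` samples and critical value `0 ≤ z ≤ 2√(1 - 1/N)`, the Katz-log lower
confidence limit `ln(n₁/n₀) - z √(1/n₁ + 1/n₀ - 2/N)` is at most
`ln N - z √(1 - 1/N)`, and this maximum is attained at `n₁ = N`, `n₀ = 1`. -/
theorem katz_log_max_detectable
    (N : ℕ) (hN : 8 ≤ N) (z : ℝ) (hz0 : 0 ≤ z)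
    (hz : z ≤ 2 * Real.sqrt (1 - 1 / (N : ℝ))) :
    (∀ n₁ n₀ : ℕ, 1 ≤ n₁ → n₁ ≤ N → 1 ≤ n₀ → n₀ ≤ N →
        Real.log ((n₁ : ℝ) / (n₀ : ℝ))
            - z * Real.sqrt (1 / (n₁ : ℝ) + 1 / (n₀ : ℝ) - 2 / (N : ℝ))
          ≤ Real.log (N : ℝ) - z * Real.sqrt (1 - 1 / (N : ℝ)))
    ∧ Real.log ((N : ℝ) / (1 : ℝ))
          - z * Real.sqrt (1 / (N : ℝ) + 1 / (1 : ℝ) - 2 / (N : ℝ))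
        = Real.log (N : ℝ) - z * Real.sqrt (1 - 1 / (N : ℝ)) := by
  have hn8 : (8:ℝ) ≤ (N:ℝ) := by exact_mod_cast hN
  have hn0 : (0:ℝ) < (N:ℝ) := by linarith
  have hy1 : (0:ℝ) ≤ 1 - 1 / (N:ℝ) := by
    have : 1 / (N:ℝ) ≤ 1 := by rw [div_le_one hn0]; linarith
    linarith
  constructor
  · intro a b ha1 haN hb1 hbN
    have hA0 : (0:ℝ) < (a:ℝ) := by exact_mod_cast ha1
    have hB0 : (0:ℝ) < (b:ℝ) := by exact_mod_cast hb1
    have hAn : (a:ℝ) ≤ (N:ℝ) := by exact_mod_cast haN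
    have hBn : (b:ℝ) ≤ (N:ℝ) := by exact_mod_cast hbN
    set S := Real.sqrt (1 - 1 / (N:ℝ)) with hS
    set t := Real.sqrt (1 / (b:ℝ) - 1 / (N:ℝ)) with ht
    set s := Real.sqrt (1 / (a:ℝ) + 1 / (b:ℝ) - 2 / (N:ℝ)) with hs
    have hts : t ≤ s := by
      apply Real.sqrt_le_sqrt
      have h' : 1 / (N:ℝ) ≤ 1 / (a:ℝ) := one_div_le_one_div_of_le hA0 hAn
      have h'' : (2:ℝ) / (N:ℝ) = 1 / (N:ℝ) + 1 / (N:ℝ) := by ring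
      linarith
    have htS : t ≤ S := by
      apply Real.sqrt_le_sqrt
      have : 1 / (b:ℝ) ≤ 1 := by
        rw [div_le_one hB0]; exact_mod_cast hb1
      linarith
    have hS2 : S ^ 2 = 1 - 1 / (N:ℝ) := Real.sq_sqrt hy1
    have hkey := key_log N b hN hb1 hbN
    rw [Real.sqrt_mul hy1, ← hS, ← ht] at hkey
    have hlogA : Real.log (a:ℝ) ≤ Real.log (N:ℝ) := Real.log_le_log hA0 hAn
    have hlogAB : Real.log ((a:ℝ) / (b:ℝ)) = Real.log (a:ℝ) - Real.log (b:ℝ) :=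
      Real.log_div (ne_of_gt hA0) (ne_of_gt hB0)
    have h1 : z * t ≤ z * s := mul_le_mul_of_nonneg_left hts hz0
    have h2 : z * (S - t) ≤ 2 * S * (S - t) :=
      mul_le_mul_of_nonneg_right hz (by linarith)
    have h2' : z * S - z * t ≤ 2 * S ^ 2 - 2 * (S * t) := by nlinarith [h2]
    rw [hlogAB]
    linarith [hkey, hlogA, h1, h2', hS2]
  · have he : 1 / (N:ℝ) + 1 / (1:ℝ) - 2 / (N:ℝ) = 1 - 1 / (N:ℝ) := by ring
    rw [he, div_one]
end

section
/- Let σ(x) = 1/(1 + e^{−x}). Then for every real ε > 0: 2·σ((ε/2)·e^{ε}) − 1 ≥ σ((ε/2)·e^{2ε}) − 1/2. That is, in the exponential-mechanism leaf-label distribution of differentially private random forest, where a leaf with majority excess j outputs the majority label with probability σ(ε·e^{jε}/2) (and a tied leaf outputs each label with probability 1/2), the total variation change obtained by flipping the majority class at excess j = 1 (which equals 2σ((ε/2)e^{ε}) − 1) is at least the total variation change obtained by reducing a leaf from excess j = 2 to a tie (which equals σ((ε/2)e^{2ε}) − 1/2). -/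
set_option maxHeartbeats 1000000

private lemma cubic_le_exp {x : ℝ} (hx : 0 ≤ x) : 1 + x + x^2/2 + x^3/6 ≤ Real.exp x := by
  have h := Real.sum_le_exp_of_nonneg hx 4
  simp [Finset.sum_range_succ, Nat.factorial] at h
  linarith

private lemma mid_poly {δ : ℝ} (h0 : 0 ≤ δ) (h1 : δ ≤ 0.26) :
    0 ≤ (8*(1 + (1.6931*δ + δ^2) + (1.6931*δ + δ^2)^2/2) - 12)*(6-12*δ)^6
      + (6*(1 + (1.6931*δ + δ^2) + (1.6931*δ + δ^2)^2/2) - 1)*(6-16.7728*δ)^6 := by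
  nlinarith [mul_nonneg h0 (sub_nonneg.mpr h1), sq_nonneg δ, pow_nonneg h0 3, pow_nonneg h0 4,
    mul_nonneg (mul_nonneg h0 h0) (sub_nonneg.mpr h1), pow_nonneg h0 5, pow_nonneg h0 6,
    mul_nonneg (pow_nonneg h0 3) (sub_nonneg.mpr h1), pow_nonneg h0 8, pow_nonneg h0 10,
    mul_nonneg (pow_nonneg h0 4) (sub_nonneg.mpr h1),
    mul_nonneg (pow_nonneg h0 5) (sub_nonneg.mpr h1),
    mul_nonneg (pow_nonneg h0 8) (sub_nonneg.mpr h1)]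

/-- In the exponential-mechanism leaf-label distribution of DP random forest, the total
variation change from flipping the majority class at excess `j = 1`, which equals
`2σ((ε/2)e^ε) - 1`, is at least the change from reducing a leaf from excess `j = 2`
to a tie, which equals `σ((ε/2)e^{2ε}) - 1/2`, where `σ` is the logistic sigmoid. -/
theorem rf_flip_majority_dominates
    (sig : ℝ → ℝ) (hsig : ∀ s, sig s = 1 / (1 + Real.exp (-s))) :
    ∀ ε : ℝ, 0 < ε →
      2 * sig (ε / 2 * Real.exp ε) - 1 ≥ sig (ε / 2 * Real.exp (2 * ε)) - 1 / 2 := by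
  intro ε hε
  set a := ε / 2 * Real.exp ε with ha_def
  set b := ε / 2 * Real.exp (2 * ε) with hb_def
  have ha : 0 < a := by positivity
  have hb : 0 < b := by positivity
  have hbea : b = a * Real.exp ε := by
    rw [ha_def, hb_def, two_mul, Real.exp_add]; ring
  have hab : a ≤ b := by
    rw [hbea]
    nlinarith [Real.one_le_exp hε.le]
  set t := Real.exp (-a) with ht_def
  set s := Real.exp (-b) with hs_def
  have ht0 : 0 < t := Real.exp_pos _
  have hs0 : 0 < s := Real.exp_pos _
  have ht1 : t < 1 := by
    rw [ht_def]; exact Real.exp_lt_one_iff.mpr (by linarith)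
  have hst : s ≤ t := Real.exp_le_exp.mpr (by linarith)
  clear_value a b t s
  suffices hF : 0 ≤ 1 + 3*s - 3*t - t*s by
    have h1t : (0:ℝ) < 1 + t := by linarith
    have h1s : (0:ℝ) < 1 + s := by linarith
    rw [hsig, hsig, ← ht_def, ← hs_def, ge_iff_le, ← sub_nonneg]
    have key : 2 * (1/(1+t)) - 1 - (1/(1+s) - 1/2)
        = (1 + 3*s - 3*t - t*s)/(2*(1+t)*(1+s)) := by
      field_simp; ring
    calc (0:ℝ) ≤ (1 + 3*s - 3*t - t*s)/(2*(1+t)*(1+s)) := by positivity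
    _ = 2 * (1/(1+t)) - 1 - (1/(1+s) - 1/2) := key.symm
  rcases le_or_gt (Real.exp ε) 2 with hc | hc
  · -- Case 1 : exp ε ≤ 2, so b ≤ 2a and F = (1-t)^3 + (3-t)(s-t^2)
    have hb2 : b ≤ 2*a := by rw [hbea]; nlinarith
    have htsq : t^2 = Real.exp (-(2*a)) := by
      rw [ht_def, sq, ← Real.exp_add]; ring_nf
    have hs2 : t^2 ≤ s := by
      rw [htsq, hs_def]; exact Real.exp_le_exp.mpr (by linarith)
    nlinarith [mul_nonneg (by linarith : (0:ℝ) ≤ 3 - t) (by linarith : (0:ℝ) ≤ s - t^2),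
      pow_nonneg (by linarith : (0:ℝ) ≤ 1 - t) 3]
  · have hl1 : (0.6931:ℝ) < Real.log 2 := by linarith [Real.log_two_gt_d9]
    have hl2 : Real.log 2 < 0.6932 := by linarith [Real.log_two_lt_d9]
    have hlε : Real.log 2 < ε := by
      have := Real.log_lt_log (by norm_num : (0:ℝ) < 2) hc
      rwa [Real.log_exp] at this
    have hexpl : Real.exp (Real.log 2) = 2 := Real.exp_log (by norm_num)
    rcases le_or_gt ε (Real.log 2 + 0.26) with hm | hm
    · -- Case 3 : middle range, log 2 < ε ≤ log 2 + 0.26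
      set l := Real.log 2 with hl_def
      set δ := ε - l with hδ_def
      have hδ0 : 0 < δ := by simp only [hδ_def]; linarith
      have hδ1 : δ ≤ 0.26 := by simp only [hδ_def]; linarith
      have hεeq : ε = l + δ := by rw [hδ_def]; ring
      clear_value l δ
      have hexpε : Real.exp ε = 2 * Real.exp δ := by
        rw [hεeq, Real.exp_add, hexpl]
      have hlδ : 0 < l + δ := by linarith
      set x := 1.6931*δ + δ^2 with hx_def
      have hx0 : 0 ≤ x := by rw [hx_def]; nlinarith
      clear_value x
      have hax : l + x ≤ a := by
        rw [ha_def, hexpε, hεeq, hx_def]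
        have h1 : (l+δ)*(1+δ) ≤ (l+δ)*Real.exp δ :=
          mul_le_mul_of_nonneg_left (by linarith [Real.add_one_le_exp δ]) hlδ.le
        have h2 : 0 ≤ (l - 0.6931)*δ := mul_nonneg (by linarith) hδ0.le
        nlinarith [h1, h2]
      set Q := 1 + x + x^2/2 with hQ_def
      have hQ1 : (1:ℝ) ≤ Q := by rw [hQ_def]; nlinarith
      have hQ0 : (0:ℝ) < Q := by linarith
      clear_value Q
      -- upper bound on t
      have hT : t ≤ 1/(2*Q) := by
        have h2 : t ≤ Real.exp (-(l+x)) := by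
          rw [ht_def]; exact Real.exp_le_exp.mpr (by linarith)
        have h3 : Real.exp (-(l+x)) = Real.exp (-l) * Real.exp (-x) := by
          rw [← Real.exp_add]; ring_nf
        have h4 : Real.exp (-l) = 1/2 := by
          rw [Real.exp_neg, hexpl]; norm_num
        have hQe : Q ≤ Real.exp x := by
          rw [hQ_def]; exact Real.quadratic_le_exp_of_nonneg hx0
        have h5 : Real.exp (-x) ≤ 1/Q := by
          rw [Real.exp_neg, ← one_div]
          exact one_div_le_one_div_of_le hQ0 hQe
        calc t ≤ Real.exp (-l) * Real.exp (-x) := by rw [← h3]; exact h2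
        _ ≤ (1/2) * (1/Q) := by
            rw [h4]
            exact mul_le_mul_of_nonneg_left h5 (by norm_num)
        _ = 1/(2*Q) := by ring
      -- lower bound on s
      have hu : (0:ℝ) < 1 - 2*δ := by linarith
      set β := 4.7728*δ/(1-2*δ) with hβ_def
      have hβ0 : 0 ≤ β := by
        rw [hβ_def]; exact div_nonneg (by linarith) hu.le
      clear_value β
      have hβ6 : β ≤ 6 := by
        rw [hβ_def, div_le_iff₀ hu]; nlinarith
      have hbB : b ≤ 2*l + β := by
        have hexp2δ : Real.exp δ * Real.exp δ * (1-2*δ) ≤ 1 := by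
          have h1 : 1 - 2*δ ≤ Real.exp (-(2*δ)) := by
            have := Real.add_one_le_exp (-(2*δ)); linarith
          have h2 : Real.exp (-(2*δ)) * (Real.exp δ * Real.exp δ) = 1 := by
            rw [← Real.exp_add, ← Real.exp_add]; norm_num; ring
          nlinarith [mul_pos (Real.exp_pos δ) (Real.exp_pos δ)]
        have hbeq2 : b = 2*(l+δ) * (Real.exp δ * Real.exp δ) := by
          rw [hb_def, two_mul, Real.exp_add, hexpε, hεeq]; ring
        have h1 : b * (1-2*δ) ≤ 2*(l+δ) := by
          rw [hbeq2]
          have := mul_le_mul_of_nonneg_left hexp2δ (by linarith : (0:ℝ) ≤ 2*(l+δ))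
          nlinarith [this]
        have h2 : (2*l + β) * (1-2*δ) = 2*l*(1-2*δ) + 4.7728*δ := by
          rw [hβ_def]; field_simp
        nlinarith [h1, h2]
      have hsS : (1-β/6)^6/4 ≤ s := by
        have h2 : Real.exp (-(2*l+β)) ≤ s := by
          rw [hs_def]; exact Real.exp_le_exp.mpr (by linarith [hbB])
        have h3 : Real.exp (-(2*l+β)) = Real.exp (-(2*l)) * Real.exp (-β) := by
          rw [← Real.exp_add]; ring_nf
        have h4 : Real.exp (-(2*l)) = 1/4 := by
          rw [Real.exp_neg, two_mul, Real.exp_add, hexpl]; norm_num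
        have h5 : (1-β/6)^6 ≤ Real.exp (-β) := by
          have h6 : (0:ℝ) ≤ 1 - β/6 := by linarith
          have h7 : 1 - β/6 ≤ Real.exp (-(β/6)) := by
            have := Real.add_one_le_exp (-(β/6)); linarith
          calc (1-β/6)^6 ≤ Real.exp (-(β/6))^6 := pow_le_pow_left₀ h6 h7 6
          _ = Real.exp (-β) := by
              rw [← Real.exp_nat_mul]; norm_num; congr 1; ring
        calc (1-β/6)^6/4 = (1/4) * (1-β/6)^6 := by ring
        _ ≤ (1/4) * Real.exp (-β) := by
            exact mul_le_mul_of_nonneg_left h5 (by norm_num)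
        _ = Real.exp (-(2*l)) * Real.exp (-β) := by rw [h4]
        _ = Real.exp (-(2*l+β)) := h3.symm
        _ ≤ s := h2
      -- the key rational inequality
      have hm6 : (1-β/6) * (6*(1-2*δ)) = 6 - 16.7728*δ := by
        rw [hβ_def]
        have e : 4.7728*δ/(1-2*δ)*(1-2*δ) = 4.7728*δ := div_mul_cancel₀ _ hu.ne'
        linear_combination (-1:ℝ) * e
      have hpoly := mid_poly hδ0.le hδ1
      have hQx : Q = 1 + (1.6931*δ + δ^2) + (1.6931*δ + δ^2)^2/2 := by
        rw [hQ_def, hx_def]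
      have hD : (0:ℝ) < (6*(1-2*δ))^6 := by positivity
      have hkey2 : 0 ≤ 8*Q - 12 + (6*Q-1)*(1-β/6)^6 := by
        have hexpand : (8*Q - 12 + (6*Q-1)*(1-β/6)^6) * (6*(1-2*δ))^6
            = (8*Q-12)*(6*(1-2*δ))^6 + (6*Q-1)*((1-β/6)*(6*(1-2*δ)))^6 := by ring
        have h9 : 0 ≤ (8*Q-12)*(6*(1-2*δ))^6 + (6*Q-1)*((1-β/6)*(6*(1-2*δ)))^6 := by
          rw [hm6]
          have : (6:ℝ)*(1-2*δ) = 6 - 12*δ := by ring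
          rw [this, hQx]
          exact hpoly
        have h12 : 0 * (6*(1-2*δ))^6 ≤ (8*Q - 12 + (6*Q-1)*(1-β/6)^6) * (6*(1-2*δ))^6 := by
          rw [zero_mul, hexpand]; exact h9
        exact le_of_mul_le_mul_right h12 hD
      have hkey : 0 ≤ 1 - 3*(1/(2*Q)) + (3 - 1/(2*Q)) * ((1-β/6)^6/4) := by
        have h10 : (1 - 3*(1/(2*Q)) + (3 - 1/(2*Q)) * ((1-β/6)^6/4)) * (8*Q)
            = 8*Q - 12 + (6*Q-1)*(1-β/6)^6 := by
          field_simp; ring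
        have h13 : 0 * (8*Q) ≤ (1 - 3*(1/(2*Q)) + (3 - 1/(2*Q)) * ((1-β/6)^6/4)) * (8*Q) := by
          rw [zero_mul, h10]; exact hkey2
        exact le_of_mul_le_mul_right h13 (by linarith)
      -- assemble
      have hS0 : (0:ℝ) ≤ (1-β/6)^6/4 := by positivity
      have hT2 : 1/(2*Q) ≤ 1/2 := by
        rw [div_le_div_iff₀ (by linarith) (by norm_num)]; linarith
      have e1 : (3 - 1/(2*Q)) * ((1-β/6)^6/4) ≤ (3-t)*s := by
        apply mul_le_mul (by linarith) hsS hS0 (by linarith)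
      have hring : 1 + 3*s - 3*t - t*s = 1 - 3*t + (3-t)*s := by ring
      rw [hring]
      linarith [e1, hkey, hT]
    · -- Case 2 : ε > log 2 + 0.26
      have hεlb : (0.9531:ℝ) ≤ ε := by linarith
      have hexpεlb : (2.5876:ℝ) ≤ Real.exp ε := by
        have h1 : Real.exp (Real.log 2 + 0.26) ≤ Real.exp ε := Real.exp_le_exp.mpr (by linarith)
        have h2 : Real.exp (Real.log 2 + 0.26) = 2 * Real.exp 0.26 := by
          rw [Real.exp_add, hexpl]
        have h3 : (1.2938:ℝ) ≤ Real.exp 0.26 := by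
          have := Real.quadratic_le_exp_of_nonneg (by norm_num : (0:ℝ) ≤ 0.26)
          nlinarith
        nlinarith
      have halb : (1.2331:ℝ) ≤ a := by
        rw [ha_def]; nlinarith
      have hexpa : (3:ℝ) ≤ Real.exp a := by
        have h := cubic_le_exp (le_of_lt ha)
        nlinarith
      have ht3 : 3*t ≤ 1 := by
        have h1 : t * Real.exp a = 1 := by
          rw [ht_def, ← Real.exp_add]; norm_num
        nlinarith
      nlinarith [mul_nonneg hs0.le (by linarith : (0:ℝ) ≤ 3 - t)]
end
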